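/- arXiv:1111.5879 — 5 statements merged into one kernel-verified Lean document; each statement's English description precedes it below -/
import Mathlib

section
/- Let s > 3/2 and r ∈ ℝ satisfy r ≤ 1/2 and s + r ≥ 2. Then there exists a constant C = C(s, r) > 0 such that for all 2π-periodic functions f, g on the circle 𝕋, ‖fg‖_{H^{r-1}(𝕋)} ≤ C ‖f‖_{H^{s-1}(𝕋)} ‖g‖_{H^{r-1}(𝕋)}. -/
/-!
Write `⟨n⟩ = (1 + n²)^{1/2}`, `a = s - 1 > 1/2` and `b = 1 - r`, so that `0 ≤ b ≤ a`.
Since `∑ ⟨n⟩^{-2a} < ∞`, Cauchy–Schwarz puts `f̂` in `ℓ¹`. Fourier coefficients determine an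
integrable function on the circle (trigonometric polynomials are uniformly dense in the continuous
functions), so `f` agrees a.e. with its absolutely convergent Fourier series and `(fg)^` is, up to
the factor `(2π)^{-1/2}`, the convolution `f̂ * ĝ`.

Peetre's inequality `⟨n - k⟩^b ≤ 2^b (⟨n⟩^b + ⟨k⟩^b)` bounds `⟨n⟩^{-b} |f̂(k)| |ĝ(n - k)|` by
`A(k) Q(n, k) B(n - k)` with `A(k) = ⟨k⟩^a |f̂(k)|`, `B(m) = ⟨m⟩^{-b} |ĝ(m)|` and
`Q(n, k) = 2^b (⟨k⟩^{-a} + ⟨n⟩^{-b} ⟨k⟩^{b-a})`. Cauchy–Schwarz in `k` reduces the estimate to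
`sup_m ∑_k Q(m + k, k)² < ∞`, which follows from
`⟨k⟩^{-2(a-b)} ⟨m + k⟩^{-2b} ≤ ⟨k⟩^{-2a} + ⟨m + k⟩^{-2a}`.
-/

open MeasureTheory Function
open scoped ENNReal

/-- The `n`-th Fourier coefficient of a `2π`-periodic function `f : ℝ → ℂ`, with unitary
normalization: `f̂(n) = (2π)^(-1/2) ∫_0^{2π} f(x) e^{-inx} dx`. -/
noncomputable def fourierCoef (f : ℝ → ℂ) (n : ℤ) : ℂ :=
  (Real.sqrt (2 * Real.pi) : ℂ)⁻¹ *
    ∫ x in (0:ℝ)..(2 * Real.pi), f x * Complex.exp (-Complex.I * (n : ℂ) * (x : ℂ))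

/-- The Sobolev norm `‖f‖_{H^σ(𝕋)} = (∑_{n ∈ ℤ} (1+n²)^σ |f̂(n)|²)^{1/2}`, valued in `ℝ≥0∞`
so that it is meaningful (possibly infinite) for an arbitrary periodic function. -/
noncomputable def eSobNorm (σ : ℝ) (f : ℝ → ℂ) : ℝ≥0∞ :=
  (∑' n : ℤ, ENNReal.ofReal ((1 + (n : ℝ) ^ 2) ^ σ * ‖fourierCoef f n‖ ^ 2)) ^ (1/2 : ℝ)

open Real Filter Topology AddCircle
open scoped BoundedContinuousFunction

namespace ENNReal

theorem tsum_mul_sq_le {ι : Type*} (f g : ι → ℝ≥0∞) :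
    (∑' i, f i * g i) ^ 2 ≤ (∑' i, f i ^ 2) * ∑' i, g i ^ 2 := by
  have holder : ∑' i, f i * g i ≤
      (∑' i, f i ^ (2 : ℝ)) ^ (1 / 2 : ℝ) * (∑' i, g i ^ (2 : ℝ)) ^ (1 / 2 : ℝ) := by
    rw [ENNReal.tsum_eq_iSup_sum]
    refine iSup_le fun s => (inner_le_Lp_mul_Lq s f g .two_two).trans ?_
    gcongr <;> exact ENNReal.sum_le_tsum s
  calc (∑' i, f i * g i) ^ 2
      ≤ ((∑' i, f i ^ (2 : ℝ)) ^ (1 / 2 : ℝ) * (∑' i, g i ^ (2 : ℝ)) ^ (1 / 2 : ℝ)) ^ 2 := by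
        gcongr
    _ = (∑' i, f i ^ 2) * ∑' i, g i ^ 2 := by
        simp only [mul_pow, ← ENNReal.rpow_natCast, ← ENNReal.rpow_mul]
        norm_num

theorem add_sq_le_two_mul (x y : ℝ≥0∞) : (x + y) ^ 2 ≤ 2 * (x ^ 2 + y ^ 2) := by
  induction x using ENNReal.recTopCoe with
  | top => simp
  | coe x =>
    induction y using ENNReal.recTopCoe with
    | top => simp
    | coe y => exact_mod_cast (add_sq_le : (x + y) ^ 2 ≤ 2 * (x ^ 2 + y ^ 2))

end ENNReal

theorem tsum_sq_tsum_kernel_le {ι : Type*} [AddGroup ι] (A B : ι → ℝ≥0∞) (Q : ι → ι → ℝ≥0∞)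
    {M : ℝ≥0∞} (hM : ∀ m, ∑' k, Q (m + k) k ^ 2 ≤ M) :
    ∑' n, (∑' k, A k * Q n k * B (n - k)) ^ 2 ≤ M * (∑' k, A k ^ 2) * ∑' m, B m ^ 2 := by
  have cauchy_schwarz : ∀ n, (∑' k, A k * Q n k * B (n - k)) ^ 2 ≤
      (∑' k, A k ^ 2) * ∑' k, (Q n k * B (n - k)) ^ 2 := fun n => by
    simpa only [mul_assoc] using ENNReal.tsum_mul_sq_le A (fun k => Q n k * B (n - k))
  calc ∑' n, (∑' k, A k * Q n k * B (n - k)) ^ 2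
      ≤ ∑' n, (∑' k, A k ^ 2) * ∑' k, (Q n k * B (n - k)) ^ 2 :=
        ENNReal.tsum_le_tsum cauchy_schwarz
    _ = (∑' k, A k ^ 2) * ∑' k, ∑' m, Q (m + k) k ^ 2 * B m ^ 2 := by
        rw [ENNReal.tsum_mul_left, ENNReal.tsum_comm]
        congr 1
        refine tsum_congr fun k => ?_
        rw [← (Equiv.addRight k).tsum_eq]
        simp [mul_pow]
    _ = (∑' k, A k ^ 2) * ∑' m, B m ^ 2 * ∑' k, Q (m + k) k ^ 2 := by
        rw [ENNReal.tsum_comm]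
        simp only [← ENNReal.tsum_mul_left, mul_comm]
    _ ≤ (∑' k, A k ^ 2) * ∑' m, B m ^ 2 * M := by gcongr with m; exact hM m
    _ = M * (∑' k, A k ^ 2) * ∑' m, B m ^ 2 := by rw [ENNReal.tsum_mul_right]; ring

noncomputable def sobolevWeight (t : ℝ) (n : ℤ) : ℝ≥0∞ := ENNReal.ofReal ((1 + (n : ℝ) ^ 2) ^ t)

theorem one_add_sq_pos (n : ℤ) : 0 < 1 + (n : ℝ) ^ 2 := by positivity

theorem sobolevWeight_mul (s t : ℝ) (n : ℤ) :
    sobolevWeight s n * sobolevWeight t n = sobolevWeight (s + t) n := by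
  rw [sobolevWeight, sobolevWeight, sobolevWeight, ← ENNReal.ofReal_mul (by positivity),
    ← Real.rpow_add (one_add_sq_pos n)]

theorem sobolevWeight_neg_mul_self (t : ℝ) (n : ℤ) :
    sobolevWeight (-t) n * sobolevWeight t n = 1 := by
  rw [sobolevWeight_mul, neg_add_cancel]; simp [sobolevWeight]

theorem sobolevWeight_half_sq (t : ℝ) (n : ℤ) :
    sobolevWeight (t / 2) n ^ 2 = sobolevWeight t n := by
  rw [sq, sobolevWeight_mul, add_halves]

theorem sobolevWeight_ne_zero (t : ℝ) (n : ℤ) : sobolevWeight t n ≠ 0 :=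
  (ENNReal.ofReal_pos.mpr (Real.rpow_pos_of_pos (one_add_sq_pos n) t)).ne'

theorem sobolevWeight_sub_le {c : ℝ} (hc : 0 ≤ c) (n k : ℤ) :
    sobolevWeight c (n - k) ≤ ENNReal.ofReal (4 ^ c) * (sobolevWeight c n + sobolevWeight c k) := by
  have dominated : ∀ m : ℤ, (n : ℝ) ^ 2 ≤ m ^ 2 → (k : ℝ) ^ 2 ≤ m ^ 2 →
      sobolevWeight c (n - k) ≤ ENNReal.ofReal (4 ^ c) * sobolevWeight c m := fun m hn hk => by
    rw [sobolevWeight, sobolevWeight, ← ENNReal.ofReal_mul (by positivity),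
      ← Real.mul_rpow (by norm_num) (one_add_sq_pos m).le]
    refine ENNReal.ofReal_le_ofReal (Real.rpow_le_rpow (one_add_sq_pos _).le ?_ hc)
    push_cast
    nlinarith [sq_nonneg ((n : ℝ) + k)]
  rcases le_total ((n : ℝ) ^ 2) ((k : ℝ) ^ 2) with h | h
  · exact (dominated k h le_rfl).trans (by gcongr; exact le_add_self)
  · exact (dominated n le_rfl h).trans (by gcongr; exact le_self_add)

theorem sobolevWeight_le_of_sq_le {t : ℝ} (ht : t ≤ 0) {k m : ℤ}
    (h : (k : ℝ) ^ 2 ≤ (m : ℝ) ^ 2) : sobolevWeight t m ≤ sobolevWeight t k :=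
  ENNReal.ofReal_le_ofReal (Real.rpow_le_rpow_of_nonpos (one_add_sq_pos k) (by linarith) ht)

theorem sobolevWeight_neg_mul_neg_le {β γ : ℝ} (hβ : 0 ≤ β) (hγ : 0 ≤ γ) (k m : ℤ) :
    sobolevWeight (-β) k * sobolevWeight (-γ) m ≤
      sobolevWeight (-(β + γ)) k + sobolevWeight (-(β + γ)) m := by
  rcases le_total ((k : ℝ) ^ 2) ((m : ℝ) ^ 2) with h | h
  · calc sobolevWeight (-β) k * sobolevWeight (-γ) m
        ≤ sobolevWeight (-β) k * sobolevWeight (-γ) k := by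
          gcongr; exact sobolevWeight_le_of_sq_le (by linarith) h
      _ ≤ _ := by rw [sobolevWeight_mul, ← neg_add]; exact le_self_add
  · calc sobolevWeight (-β) k * sobolevWeight (-γ) m
        ≤ sobolevWeight (-β) m * sobolevWeight (-γ) m := by
          gcongr; exact sobolevWeight_le_of_sq_le (by linarith) h
      _ ≤ _ := by rw [sobolevWeight_mul, ← neg_add]; exact le_add_self

theorem tsum_sobolevWeight_ne_top {a : ℝ} (ha : 1 / 2 < a) : ∑' n, sobolevWeight (-a) n ≠ ∞ := by
  have summable : Summable fun n : ℤ => (1 + (n : ℝ) ^ 2) ^ (-a) := by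
    refine Summable.of_norm_bounded_eventually
      (Real.summable_abs_int_rpow (b := 2 * a) (by linarith)) ?_
    filter_upwards [(Set.finite_singleton (0 : ℤ)).compl_mem_cofinite] with n hn
    have hn1 : 1 ≤ |(n : ℝ)| := by
      rw [← Int.cast_abs]; exact_mod_cast Int.one_le_abs hn
    rw [Real.norm_of_nonneg (by positivity), show -(2 * a) = 2 * -a by ring,
      Real.rpow_mul (abs_nonneg _), Real.rpow_two, sq_abs]
    exact Real.rpow_le_rpow_of_nonpos (by nlinarith [sq_abs (n : ℝ)]) (by linarith) (by linarith)
  simp only [sobolevWeight]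
  rw [← ENNReal.ofReal_tsum_of_nonneg (fun n => by positivity) summable]
  exact ENNReal.ofReal_ne_top

noncomputable def weightedSqSum (t : ℝ) (u : ℤ → ℝ≥0∞) : ℝ≥0∞ :=
  ∑' n, sobolevWeight t n * u n ^ 2

/-- The bound that Peetre's inequality gives for `⟨n⟩^{-b} ⟨k⟩^{-a} ⟨n - k⟩^b`. -/
noncomputable def peetreKernel (a b : ℝ) (n k : ℤ) : ℝ≥0∞ :=
  ENNReal.ofReal (4 ^ (b / 2)) *
    (sobolevWeight (-a / 2) k + sobolevWeight (-b / 2) n * sobolevWeight ((b - a) / 2) k)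

theorem mul_le_peetreKernel {a b : ℝ} (hb : 0 ≤ b) (n k : ℤ) (x y : ℝ≥0∞) :
    sobolevWeight (-b / 2) n * (x * y) ≤
      sobolevWeight (a / 2) k * x * peetreKernel a b n k *
        (sobolevWeight (-b / 2) (n - k) * y) := by
  have hx : x = sobolevWeight (-a / 2) k * (sobolevWeight (a / 2) k * x) := by
    rw [← mul_assoc, neg_div, sobolevWeight_neg_mul_self, one_mul]
  have hy : y = sobolevWeight (b / 2) (n - k) * (sobolevWeight (-b / 2) (n - k) * y) := by
    rw [← mul_assoc, mul_comm (sobolevWeight (b / 2) _), neg_div, sobolevWeight_neg_mul_self,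
      one_mul]
  have hn : sobolevWeight (-b / 2) n * sobolevWeight (b / 2) n = 1 := by
    rw [neg_div, sobolevWeight_neg_mul_self]
  have hk : sobolevWeight (-a / 2) k * sobolevWeight (b / 2) k = sobolevWeight ((b - a) / 2) k := by
    rw [sobolevWeight_mul]; congr 1; ring
  set X := sobolevWeight (a / 2) k * x
  set Y := sobolevWeight (-b / 2) (n - k) * y
  calc sobolevWeight (-b / 2) n * (x * y)
      = sobolevWeight (-b / 2) n * sobolevWeight (-a / 2) k * X * Y *
          sobolevWeight (b / 2) (n - k) := by
        rw [hx, hy]; ring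
    _ ≤ sobolevWeight (-b / 2) n * sobolevWeight (-a / 2) k * X * Y *
          (ENNReal.ofReal (4 ^ (b / 2)) * (sobolevWeight (b / 2) n + sobolevWeight (b / 2) k)) := by
        gcongr; exact sobolevWeight_sub_le (by linarith) n k
    _ = X * Y * ENNReal.ofReal (4 ^ (b / 2)) *
          (sobolevWeight (-a / 2) k * (sobolevWeight (-b / 2) n * sobolevWeight (b / 2) n) +
            sobolevWeight (-b / 2) n * (sobolevWeight (-a / 2) k * sobolevWeight (b / 2) k)) := by
        ring
    _ = X * peetreKernel a b n k * Y := by rw [hn, hk, peetreKernel]; ring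

theorem tsum_peetreKernel_sq_le {a b : ℝ} (hb : 0 ≤ b) (hba : b ≤ a) (m : ℤ) :
    ∑' k, peetreKernel a b (m + k) k ^ 2 ≤
      6 * ENNReal.ofReal (4 ^ (b / 2)) ^ 2 * ∑' n, sobolevWeight (-a) n := by
  set K := ∑' n, sobolevWeight (-a) n
  have cross : ∑' k, sobolevWeight (-b) (m + k) * sobolevWeight (b - a) k ≤ 2 * K := by
    calc ∑' k, sobolevWeight (-b) (m + k) * sobolevWeight (b - a) k
        ≤ ∑' k, (sobolevWeight (-a) k + sobolevWeight (-a) (m + k)) := by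
          refine ENNReal.tsum_le_tsum fun k => ?_
          have := sobolevWeight_neg_mul_neg_le (sub_nonneg.mpr hba) hb k (m + k)
          rw [neg_sub, sub_add_cancel] at this
          rwa [mul_comm]
      _ = 2 * K := by
          have shift : ∑' k, sobolevWeight (-a) (m + k) = K := (Equiv.addLeft m).tsum_eq _
          rw [ENNReal.tsum_add, shift, two_mul]
  calc ∑' k, peetreKernel a b (m + k) k ^ 2
      ≤ ∑' k, ENNReal.ofReal (4 ^ (b / 2)) ^ 2 * (2 * (sobolevWeight (-a) k +
          sobolevWeight (-b) (m + k) * sobolevWeight (b - a) k)) := by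
        refine ENNReal.tsum_le_tsum fun k => ?_
        rw [peetreKernel, mul_pow]
        gcongr
        refine (ENNReal.add_sq_le_two_mul _ _).trans_eq ?_
        simp only [mul_pow, sobolevWeight_half_sq]
    _ = 2 * ENNReal.ofReal (4 ^ (b / 2)) ^ 2 *
          (K + ∑' k, sobolevWeight (-b) (m + k) * sobolevWeight (b - a) k) := by
        rw [ENNReal.tsum_mul_left, ENNReal.tsum_mul_left, ENNReal.tsum_add]; ring
    _ ≤ 2 * ENNReal.ofReal (4 ^ (b / 2)) ^ 2 * (K + 2 * K) := by gcongr
    _ = 6 * ENNReal.ofReal (4 ^ (b / 2)) ^ 2 * K := by ring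

theorem weightedSqSum_conv_le {a b : ℝ} (hb : 0 ≤ b) (hba : b ≤ a) (F G : ℤ → ℝ≥0∞) :
    weightedSqSum (-b) (fun n => ∑' k, F k * G (n - k)) ≤
      6 * ENNReal.ofReal (4 ^ (b / 2)) ^ 2 * (∑' n, sobolevWeight (-a) n) *
        weightedSqSum a F * weightedSqSum (-b) G := by
  calc weightedSqSum (-b) (fun n => ∑' k, F k * G (n - k))
      = ∑' n, (∑' k, sobolevWeight (-b / 2) n * (F k * G (n - k))) ^ 2 := by
        refine tsum_congr fun n => ?_
        rw [ENNReal.tsum_mul_left, mul_pow, sobolevWeight_half_sq]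
    _ ≤ ∑' n, (∑' k, sobolevWeight (a / 2) k * F k * peetreKernel a b n k *
          (sobolevWeight (-b / 2) (n - k) * G (n - k))) ^ 2 :=
        ENNReal.tsum_le_tsum fun n => pow_le_pow_left'
          (ENNReal.tsum_le_tsum fun k => mul_le_peetreKernel hb n k _ _) 2
    _ ≤ _ := tsum_sq_tsum_kernel_le (fun k => sobolevWeight (a / 2) k * F k)
          (fun m => sobolevWeight (-b / 2) m * G m) _ (tsum_peetreKernel_sq_le hb hba)
    _ = _ := by simp only [mul_pow, sobolevWeight_half_sq, weightedSqSum]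

theorem weightedSqSum_mono {t : ℝ} {u v : ℤ → ℝ≥0∞} (h : ∀ n, u n ≤ v n) :
    weightedSqSum t u ≤ weightedSqSum t v :=
  ENNReal.tsum_le_tsum fun n => by gcongr; exact h n

theorem tsum_sq_le_mul_weightedSqSum (a : ℝ) (u : ℤ → ℝ≥0∞) :
    (∑' n, u n) ^ 2 ≤ (∑' n, sobolevWeight (-a) n) * weightedSqSum a u := by
  have split : ∀ n, u n = sobolevWeight (-a / 2) n * (sobolevWeight (a / 2) n * u n) := fun n => by
    rw [← mul_assoc, neg_div, sobolevWeight_neg_mul_self, one_mul]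
  rw [tsum_congr split]
  refine (ENNReal.tsum_mul_sq_le _ _).trans_eq ?_
  simp only [mul_pow, sobolevWeight_half_sq, weightedSqSum]

theorem ae_eq_zero_of_forall_integral_smul_eq_zero {X E : Type*} [TopologicalSpace X]
    [HasOuterApproxClosed X] [MeasurableSpace X] [BorelSpace X] [NormedAddCommGroup E]
    [NormedSpace ℝ E] [CompleteSpace E] {μ : Measure X} {H : X → E} (hH : Integrable H μ)
    (h : ∀ φ : X →ᵇ NNReal, ∫ x, (φ x : ℝ) • H x ∂μ = 0) : H =ᵐ[μ] 0 := by
  refine ae_eq_zero_of_forall_setIntegral_isClosed_eq_zero hH fun s hs => ?_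
  have approx : Tendsto (fun n => ∫ x, (hs.apprSeq n x : ℝ) • H x ∂μ) atTop
      (𝓝 (∫ x in s, H x ∂μ)) := by
    rw [← integral_indicator hs.measurableSet]
    refine tendsto_integral_of_dominated_convergence (fun x => ‖H x‖)
      (fun n => ((hs.apprSeq n).continuous.measurable.coe_nnreal_real.aestronglyMeasurable).smul
        hH.aestronglyMeasurable) hH.norm (fun n => ae_of_all _ fun x => ?_)
      (ae_of_all _ fun x => ?_)
    · rw [norm_smul, NNReal.norm_eq]
      exact mul_le_of_le_one_left (norm_nonneg _)
        (by exact_mod_cast HasOuterApproxClosed.apprSeq_apply_le_one hs n x)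
    · have := ((NNReal.continuous_coe.tendsto _).comp
        (tendsto_pi_nhds.mp (HasOuterApproxClosed.tendsto_apprSeq hs) x)).smul_const (H x)
      by_cases hx : x ∈ s <;> simpa [hx] using this
  simp only [h] at approx
  exact tendsto_nhds_unique approx tendsto_const_nhds

section AddCircle

variable {T : ℝ} [Fact (0 < T)]

theorem integral_mul_eq_zero_of_fourierCoeff_eq_zero {F : AddCircle T → ℂ}
    (hF : Integrable F haarAddCircle) (h : ∀ n, fourierCoeff F n = 0)
    (φ : C(AddCircle T, ℂ)) : ∫ x, φ x * F x ∂haarAddCircle = 0 := by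
  have integrable : ∀ ψ : C(AddCircle T, ℂ), Integrable (fun x => ψ x * F x)
      haarAddCircle := fun ψ =>
    hF.bdd_mul ψ.continuous.aestronglyMeasurable (ae_of_all _ ψ.norm_coe_le_norm)
  let pairing : C(AddCircle T, ℂ) →ₗ[ℂ] ℂ :=
    { toFun := fun ψ => ∫ x, ψ x * F x ∂haarAddCircle
      map_add' := fun ψ χ => by
        simp only [ContinuousMap.add_apply, add_mul, integral_add (integrable ψ) (integrable χ)]
      map_smul' := fun c ψ => by
        simp only [ContinuousMap.smul_apply, smul_eq_mul, mul_assoc, integral_const_mul,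
          RingHom.id_apply] }
  let L := pairing.mkContinuous (∫ x, ‖F x‖ ∂haarAddCircle) fun ψ => by
    calc ‖∫ x, ψ x * F x ∂haarAddCircle‖
        ≤ ∫ x, ‖ψ‖ * ‖F x‖ ∂haarAddCircle :=
          norm_integral_le_of_norm_le (hF.norm.const_mul _) (ae_of_all _ fun x => by
            rw [norm_mul]; gcongr; exact ψ.norm_coe_le_norm x)
      _ = (∫ x, ‖F x‖ ∂haarAddCircle) * ‖ψ‖ := by rw [integral_const_mul, mul_comm]
  have span_le : (Submodule.span ℂ (Set.range (fourier (T := T)))).topologicalClosure ≤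
      LinearMap.ker (L : C(AddCircle T, ℂ) →ₗ[ℂ] ℂ) := by
    refine Submodule.topologicalClosure_minimal _ ?_ L.isClosed_ker
    rw [Submodule.span_le]
    rintro _ ⟨n, rfl⟩
    change ∫ x, fourier n x * F x ∂haarAddCircle = 0
    simpa [fourierCoeff] using h (-n)
  exact span_le (by rw [span_fourier_closure_eq_top]; trivial)

theorem ae_eq_zero_of_fourierCoeff_eq_zero {F : AddCircle T → ℂ}
    (hF : Integrable F haarAddCircle) (h : ∀ n, fourierCoeff F n = 0) :
    F =ᵐ[haarAddCircle] 0 := by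
  refine ae_eq_zero_of_forall_integral_smul_eq_zero hF fun φ => ?_
  let ψ : C(AddCircle T, ℂ) := ⟨fun x => ((φ x : ℝ) : ℂ), by fun_prop⟩
  simpa [Complex.real_smul, ψ] using integral_mul_eq_zero_of_fourierCoeff_eq_zero hF h ψ

theorem fourierCoeff_tsum_mul {c : ℤ → ℂ} (hc : Summable (‖c ·‖)) {G : AddCircle T → ℂ}
    (hG : Integrable G haarAddCircle) (n : ℤ) :
    fourierCoeff (fun x => (∑' k, c k * fourier k x) * G x) n =
      ∑' k, c k * fourierCoeff G (n - k) := by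
  have termwise : ∀ x, fourier (-n) x • ((∑' k, c k * fourier k x) * G x) =
      ∑' k, c k * (fourier (-(n - k)) x • G x) := fun x => by
    simp only [smul_eq_mul, ← tsum_mul_right, ← tsum_mul_left]
    exact tsum_congr fun k => by rw [show -(n - k) = -n + k by ring, fourier_add]; ring
  have norm_eq : ∀ k, ∫ x, ‖c k * (fourier (-(n - k)) x • G x)‖ ∂haarAddCircle =
      ‖c k‖ * ∫ x, ‖G x‖ ∂haarAddCircle := fun k => by
    simp [integral_const_mul, Circle.norm_coe]
  simp only [fourierCoeff, termwise]
  rw [← integral_tsum_of_summable_integral_norm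
    (fun k => (hG.fourier_smul _).const_mul (c k)) (by simpa only [norm_eq] using hc.mul_right _)]
  simp only [integral_const_mul]

theorem fourierCoeff_tsum_fourier {c : ℤ → ℂ} (hc : Summable (‖c ·‖)) :
    fourierCoeff (fun x : AddCircle T => ∑' k, c k * fourier k x) = c := by
  ext n
  have := fourierCoeff_tsum_mul hc (integrable_const (μ := haarAddCircle (T := T)) (1 : ℂ)) n
  have coeff_one : fourierCoeff (fun _ : AddCircle T => (1 : ℂ)) = Pi.single 0 1 := by
    rw [← fourierCoeff_fourier (T := T) 0]; congr; ext; simp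
  simp only [mul_one, coeff_one] at this
  rw [this, tsum_eq_single n fun k hk => by simp [sub_eq_zero, Ne.symm hk]]
  simp

theorem fourierCoeff_mul_eq_tsum {F G : AddCircle T → ℂ}
    (hF : Integrable F haarAddCircle) (hG : Integrable G haarAddCircle)
    (hF_sum : Summable (‖fourierCoeff F ·‖)) (n : ℤ) :
    fourierCoeff (F * G) n = ∑' k, fourierCoeff F k * fourierCoeff G (n - k) := by
  set F₀ : AddCircle T → ℂ := fun x => ∑' k, fourierCoeff F k * fourier k x
  have hF₀ : Integrable F₀ haarAddCircle := by
    refine Continuous.integrable_of_hasCompactSupport ?_ (HasCompactSupport.of_compactSpace _)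
    refine continuous_tsum (fun k => continuous_const.mul (fourier k).continuous) hF_sum
      fun k x => ?_
    simp [Circle.norm_coe]
  have coeff_sub : ∀ m, fourierCoeff (F - F₀) m = 0 := fun m => by
    calc fourierCoeff (F - F₀) m = fourierCoeff F m - fourierCoeff F₀ m := by
          simp only [fourierCoeff, Pi.sub_apply, smul_sub]
          exact integral_sub (hF.fourier_smul _) (hF₀.fourier_smul _)
      _ = 0 := by rw [fourierCoeff_tsum_fourier hF_sum, sub_self]
  have F_ae : F =ᵐ[haarAddCircle] F₀ :=
    (ae_eq_zero_of_fourierCoeff_eq_zero (hF.sub hF₀) coeff_sub).mono fun x hx => sub_eq_zero.mp hx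
  rw [fourierCoeff_congr_ae (F_ae.mul (ae_eq_refl G))]
  exact fourierCoeff_tsum_mul hF_sum hG n

theorem fourierCoeff_mul_eq_zero_of_fourierCoeff_eq_zero (F : AddCircle T → ℂ)
    {G : AddCircle T → ℂ} (hG : Integrable G haarAddCircle)
    (h : ∀ n, fourierCoeff G n = 0) : fourierCoeff (F * G) = 0 := by
  rw [fourierCoeff_congr_ae ((ae_eq_refl F).mul (ae_eq_zero_of_fourierCoeff_eq_zero hG h))]
  ext n
  simp [fourierCoeff]

end AddCircle

instance : Fact (0 < 2 * π) := ⟨two_pi_pos⟩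

noncomputable def circleLift (f : ℝ → ℂ) : AddCircle (2 * π) → ℂ := liftIoc (2 * π) 0 f

theorem circleLift_mul (f g : ℝ → ℂ) :
    circleLift (fun x => f x * g x) = circleLift f * circleLift g := rfl

theorem integrable_circleLift {f : ℝ → ℂ} (hf : IntervalIntegrable f volume 0 (2 * π)) :
    Integrable (circleLift f) haarAddCircle := by
  rw [← memLp_one_iff_integrable]
  refine MemLp.haarAddCircle (MemLp.memLp_liftIoc ?_)
  rw [zero_add, memLp_one_iff_integrable]
  exact (intervalIntegrable_iff_integrableOn_Ioc_of_le two_pi_pos.le).mp hf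

theorem ofReal_sqrt_two_pi_ne_zero : ((√(2 * π) : ℝ) : ℂ) ≠ 0 := by
  exact_mod_cast (sqrt_pos.mpr two_pi_pos).ne'

theorem fourierCoef_eq_sqrt_mul_fourierCoeff (f : ℝ → ℂ) (n : ℤ) :
    fourierCoef f n = (√(2 * π) : ℂ) * fourierCoeff (circleLift f) n := by
  have integrand : ∀ x ∈ Set.uIoc 0 (2 * π),
      fourier (-n) (x : AddCircle (2 * π)) • circleLift f x =
        f x * Complex.exp (-Complex.I * n * x) := fun x hx => by
    rw [Set.uIoc_of_le two_pi_pos.le, ← zero_add (2 * π)] at hx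
    rw [circleLift, liftIoc_coe_apply hx, fourier_coe_apply, smul_eq_mul, mul_comm]
    congr 2
    push_cast
    field_simp
  rw [fourierCoeff_eq_intervalIntegral _ n 0, zero_add, fourierCoef, Complex.real_smul,
    intervalIntegral.integral_congr_ae (ae_of_all _ integrand), ← mul_assoc]
  congr 1
  have hs := ofReal_sqrt_two_pi_ne_zero
  have hsq : (√(2 * π) : ℂ) ^ 2 = 2 * π := by exact_mod_cast sq_sqrt two_pi_pos.le
  have hπ : (π : ℂ) ≠ 0 := by exact_mod_cast pi_ne_zero
  field_simp
  rw [hsq]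
  push_cast
  field_simp

theorem eSobNorm_eq (σ : ℝ) (f : ℝ → ℂ) :
    eSobNorm σ f = weightedSqSum σ (‖fourierCoef f ·‖ₑ) ^ (1 / 2 : ℝ) := by
  refine congrArg (· ^ (1 / 2 : ℝ)) (tsum_congr fun n => ?_)
  rw [ENNReal.ofReal_mul (by positivity), ENNReal.ofReal_pow (norm_nonneg _), ofReal_norm]
  rfl

theorem eSobNorm_eq_zero_iff {σ : ℝ} {f : ℝ → ℂ} : eSobNorm σ f = 0 ↔ ∀ n, fourierCoef f n = 0 := by
  simp [eSobNorm_eq, ENNReal.rpow_eq_zero_iff, weightedSqSum, ENNReal.tsum_eq_zero,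
    sobolevWeight_ne_zero]

theorem enorm_fourierCoef_mul_le {f g : ℝ → ℂ} (hf : IntervalIntegrable f volume 0 (2 * π))
    (hg : IntervalIntegrable g volume 0 (2 * π)) (hsum : Summable (‖fourierCoef f ·‖)) (n : ℤ) :
    ‖fourierCoef (fun x => f x * g x) n‖ₑ ≤
      ∑' k, ‖fourierCoef f k‖ₑ * ‖fourierCoef g (n - k)‖ₑ := by
  set c : ℂ := ((√(2 * π) : ℝ) : ℂ)
  have hc : 1 ≤ ‖c‖ₑ := by
    rw [← ofReal_norm, Complex.norm_real, Real.norm_of_nonneg (sqrt_nonneg _)]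
    exact ENNReal.one_le_ofReal.mpr (one_le_sqrt.mpr (by linarith [pi_gt_three]))
  have hF_sum : Summable (‖fourierCoeff (circleLift f) ·‖) := by
    refine (hsum.div_const ‖c‖).congr fun k => ?_
    rw [fourierCoef_eq_sqrt_mul_fourierCoeff, norm_mul,
      mul_div_cancel_left₀ _ (norm_ne_zero_iff.mpr ofReal_sqrt_two_pi_ne_zero)]
  simp only [fourierCoef_eq_sqrt_mul_fourierCoeff, enorm_mul, circleLift_mul,
    fourierCoeff_mul_eq_tsum (integrable_circleLift hf) (integrable_circleLift hg) hF_sum]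
  calc ‖c‖ₑ * ‖∑' k, fourierCoeff (circleLift f) k * fourierCoeff (circleLift g) (n - k)‖ₑ
      ≤ ‖c‖ₑ * ∑' k, ‖fourierCoeff (circleLift f) k‖ₑ * ‖fourierCoeff (circleLift g) (n - k)‖ₑ := by
        gcongr
        exact enorm_tsum_le_tsum_enorm.trans_eq (tsum_congr fun k => enorm_mul _ _)
    _ ≤ ‖c‖ₑ * ‖c‖ₑ * ∑' k, ‖fourierCoeff (circleLift f) k‖ₑ *
          ‖fourierCoeff (circleLift g) (n - k)‖ₑ := by
        gcongr; exact le_mul_of_one_le_right' hc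
    _ = _ := by rw [← ENNReal.tsum_mul_left]; exact tsum_congr fun k => by ring

theorem fourierCoef_mul_eq_zero {f g : ℝ → ℂ} (hg : IntervalIntegrable g volume 0 (2 * π))
    (h : ∀ n, fourierCoef g n = 0) (n : ℤ) : fourierCoef (fun x => f x * g x) n = 0 := by
  have hG : ∀ n, fourierCoeff (circleLift g) n = 0 := fun n => by
    have := h n
    rwa [fourierCoef_eq_sqrt_mul_fourierCoeff, mul_eq_zero,
      or_iff_right ofReal_sqrt_two_pi_ne_zero] at this
  rw [fourierCoef_eq_sqrt_mul_fourierCoeff, circleLift_mul,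
    fourierCoeff_mul_eq_zero_of_fourierCoeff_eq_zero _ (integrable_circleLift hg) hG, Pi.zero_apply,
    mul_zero]

theorem eSobNorm_mul_le {a b : ℝ} (ha : 1 / 2 < a) (hb : 0 ≤ b) (hba : b ≤ a) {f g : ℝ → ℂ}
    (hf : IntervalIntegrable f volume 0 (2 * π)) (hg : IntervalIntegrable g volume 0 (2 * π))
    (hf_fin : weightedSqSum a (‖fourierCoef f ·‖ₑ) ≠ ∞) :
    eSobNorm (-b) (fun x => f x * g x) ≤
      (6 * ENNReal.ofReal (4 ^ (b / 2)) ^ 2 * ∑' n, sobolevWeight (-a) n) ^ (1 / 2 : ℝ) *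
        eSobNorm a f * eSobNorm (-b) g := by
  have hsum : Summable (‖fourierCoef f ·‖) := by
    refine tsum_enorm_ne_top_iff_summable_norm.mp fun htop =>
      ENNReal.mul_ne_top (tsum_sobolevWeight_ne_top ha) hf_fin (top_le_iff.mp ?_)
    simpa [htop] using tsum_sq_le_mul_weightedSqSum a (‖fourierCoef f ·‖ₑ)
  have hsq := (weightedSqSum_mono (enorm_fourierCoef_mul_le hf hg hsum)).trans
    (weightedSqSum_conv_le hb hba (‖fourierCoef f ·‖ₑ) (‖fourierCoef g ·‖ₑ))
  rw [eSobNorm_eq, eSobNorm_eq, eSobNorm_eq, ← ENNReal.mul_rpow_of_nonneg _ _ (by norm_num),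
    ← ENNReal.mul_rpow_of_nonneg _ _ (by norm_num)]
  exact ENNReal.rpow_le_rpow hsq (by norm_num)

theorem exists_eSobNorm_mul_le {a b : ℝ} (ha : 1 / 2 < a) (hb : 0 ≤ b) (hba : b ≤ a) :
    ∃ C : ℝ, 0 < C ∧ ∀ f g : ℝ → ℂ, IntervalIntegrable f volume 0 (2 * π) →
      IntervalIntegrable g volume 0 (2 * π) →
      eSobNorm (-b) (fun x => f x * g x) ≤ ENNReal.ofReal C * eSobNorm a f * eSobNorm (-b) g := by
  set M := (6 * ENNReal.ofReal (4 ^ (b / 2)) ^ 2 * ∑' n, sobolevWeight (-a) n) ^ (1 / 2 : ℝ)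
  have hM : M ≠ ∞ := ENNReal.rpow_ne_top_of_nonneg (by norm_num) <|
    ENNReal.mul_ne_top (ENNReal.mul_ne_top (by norm_num) (ENNReal.pow_ne_top ENNReal.ofReal_ne_top))
      (tsum_sobolevWeight_ne_top ha)
  refine ⟨M.toReal + 1, by positivity, fun f g hf hg => ?_⟩
  have hC : M ≤ ENNReal.ofReal (M.toReal + 1) :=
    (ENNReal.le_ofReal_iff_toReal_le hM (by positivity)).mpr (by linarith)
  by_cases hf_fin : weightedSqSum a (‖fourierCoef f ·‖ₑ) = ∞
  · -- `∞ * 0 = 0` in `ℝ≥0∞`: when `‖g‖ = 0` the product must be shown to vanish.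
    by_cases hg0 : eSobNorm (-b) g = 0
    · rw [eSobNorm_eq_zero_iff.mpr (fourierCoef_mul_eq_zero hg (eSobNorm_eq_zero_iff.mp hg0))]
      exact zero_le
    · rw [eSobNorm_eq a f, hf_fin, ENNReal.top_rpow_of_pos (by norm_num),
        ENNReal.mul_top (ENNReal.ofReal_pos.mpr (by positivity)).ne', ENNReal.top_mul hg0]
      exact le_top
  · exact (eSobNorm_mul_le ha hb hba hf hg hf_fin).trans (by gcongr)

/-- For `s > 3/2`, `r ≤ 1/2`, `s + r ≥ 2`, there is `C = C(s,r) > 0` such that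
for all `2π`-periodic functions `f, g` on the circle,
`‖fg‖_{H^{r-1}(𝕋)} ≤ C ‖f‖_{H^{s-1}(𝕋)} ‖g‖_{H^{r-1}(𝕋)}`. -/
theorem product_sobolev_estimate_circle_low (s r : ℝ) (hs : 3/2 < s) (hr : r ≤ 1/2)
    (hsr : 2 ≤ s + r) :
    ∃ C : ℝ, 0 < C ∧ ∀ f g : ℝ → ℂ,
      Function.Periodic f (2 * Real.pi) → Function.Periodic g (2 * Real.pi) →
      IntervalIntegrable f volume 0 (2 * Real.pi) →
      IntervalIntegrable g volume 0 (2 * Real.pi) →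
      eSobNorm (r - 1) (fun x => f x * g x) ≤
        ENNReal.ofReal C * eSobNorm (s - 1) f * eSobNorm (r - 1) g := by
  obtain ⟨C, hC, hbound⟩ :=
    exists_eSobNorm_mul_le (a := s - 1) (b := 1 - r) (by linarith) (by linarith) (by linarith)
  refine ⟨C, hC, fun f g _ _ hf hg => ?_⟩
  simpa only [neg_sub] using hbound f g hf hg
end

section
/- Let s > 3/2 and r satisfy 2 − s ≤ r ≤ 1/2. Then there exists a constant C = C(s, r) > 0 such that for every k ∈ ℤ, ∑_{n∈ℤ} (1+n²)^{1-s} (1+(n-k)²)^{r-1} ≤ C (1+k²)^{r-1}. -/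
/-!
Write `a = 1 - s ≤ b = r - 1 ≤ 0`. Of the two points `n` and `n - k`, the one of larger modulus
is at distance at least `|k| / 2` from the origin, so its weight `(1 + m²)^b` is at most
`4^(-b) (1 + k²)^b`; when that point is `n`, first trade the exponents `a` and `b` between the
two factors, which only increases the product since `a ≤ b`. Hence the summand is bounded by
`4^(-b) (1 + k²)^b ((1 + n²)^a + (1 + (n - k)²)^a)`, and summing over `n` costs the factor
`2 ∑ (1 + n²)^a`, which is finite because `2a < -1`.
-/

lemma summable_one_add_sq_rpow {t : ℝ} (ht : t < -1 / 2) :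
    Summable fun n : ℤ => (1 + (n : ℝ) ^ 2) ^ t := by
  refine .of_norm_bounded_eventually
    (Real.summable_abs_int_rpow (b := -(2 * t)) (by linarith)) ?_
  filter_upwards [Filter.eventually_cofinite_ne 0] with n hn
  have hn2 : (0 : ℝ) < (n : ℝ) ^ 2 := by positivity
  calc ‖(1 + (n : ℝ) ^ 2) ^ t‖ = (1 + (n : ℝ) ^ 2) ^ t := Real.norm_of_nonneg (by positivity)
    _ ≤ ((n : ℝ) ^ 2) ^ t := Real.rpow_le_rpow_of_nonpos hn2 (by linarith) (by linarith)
    _ = |(n : ℝ)| ^ (-(-(2 * t))) := by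
      rw [neg_neg, ← sq_abs, ← Real.rpow_natCast, ← Real.rpow_mul (abs_nonneg _)]
      norm_num

lemma one_add_sq_sub_le_four_mul {u v : ℝ} (h : |v| ≤ |u|) :
    1 + (u - v) ^ 2 ≤ 4 * (1 + u ^ 2) := by
  have : |u - v| ≤ 2 * |u| := (abs_sub u v).trans (by linarith)
  nlinarith [sq_abs (u - v), sq_abs u, abs_nonneg (u - v)]

namespace Real

lemma rpow_le_rpow_neg_mul_rpow_of_le_mul {x y c b : ℝ} (hy : 0 < y) (hc : 0 < c)
    (hyx : y ≤ c * x) (hb : b ≤ 0) : x ^ b ≤ c ^ (-b) * y ^ b := by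
  have hx : 0 ≤ x := nonneg_of_mul_nonneg_right (hy.le.trans hyx) hc
  calc x ^ b = c ^ (-b) * (c * x) ^ b := by
        rw [mul_rpow hc.le hx, ← mul_assoc, ← rpow_add hc, neg_add_cancel, rpow_zero, one_mul]
    _ ≤ c ^ (-b) * y ^ b :=
        mul_le_mul_of_nonneg_left (rpow_le_rpow_of_nonpos hy hyx hb) (by positivity)

lemma rpow_mul_rpow_le_rpow_mul_rpow {p q a b : ℝ} (hp : 0 < p) (hpq : p ≤ q) (hab : a ≤ b) :
    q ^ a * p ^ b ≤ q ^ b * p ^ a := by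
  have hq : 0 < q := hp.trans_le hpq
  calc q ^ a * p ^ b = q ^ b * (q ^ (a - b) * p ^ b) := by
        rw [← mul_assoc, ← rpow_add hq, add_sub_cancel]
    _ ≤ q ^ b * (p ^ (a - b) * p ^ b) := by
        gcongr q ^ b * (?_ * p ^ b)
        exact rpow_le_rpow_of_nonpos hp hpq (sub_nonpos.2 hab)
    _ = q ^ b * p ^ a := by rw [← rpow_add hp, sub_add_cancel]

end Real

lemma one_add_sq_rpow_mul_le {a b : ℝ} (hab : a ≤ b) (hb : b ≤ 0) (u v : ℝ) :
    (1 + u ^ 2) ^ a * (1 + v ^ 2) ^ b ≤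
      4 ^ (-b) * (1 + (u - v) ^ 2) ^ b * ((1 + u ^ 2) ^ a + (1 + v ^ 2) ^ a) := by
  have hw : 0 < 1 + (u - v) ^ 2 := by positivity
  rcases le_total |v| |u| with h | h
  · have hvu : 1 + v ^ 2 ≤ 1 + u ^ 2 := by nlinarith [sq_abs u, sq_abs v, abs_nonneg v]
    calc (1 + u ^ 2) ^ a * (1 + v ^ 2) ^ b ≤ (1 + u ^ 2) ^ b * (1 + v ^ 2) ^ a :=
          Real.rpow_mul_rpow_le_rpow_mul_rpow (by positivity) hvu hab
      _ ≤ 4 ^ (-b) * (1 + (u - v) ^ 2) ^ b * (1 + v ^ 2) ^ a := by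
          gcongr
          exact Real.rpow_le_rpow_neg_mul_rpow_of_le_mul hw four_pos
            (one_add_sq_sub_le_four_mul h) hb
      _ ≤ _ := by gcongr; exact le_add_of_nonneg_left (by positivity)
  · have huv : 1 + (u - v) ^ 2 ≤ 4 * (1 + v ^ 2) := by
      rw [← neg_sub, neg_sq]; exact one_add_sq_sub_le_four_mul h
    calc (1 + u ^ 2) ^ a * (1 + v ^ 2) ^ b
        ≤ (1 + u ^ 2) ^ a * (4 ^ (-b) * (1 + (u - v) ^ 2) ^ b) := by
          gcongr; exact Real.rpow_le_rpow_neg_mul_rpow_of_le_mul hw four_pos huv hb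
      _ = 4 ^ (-b) * (1 + (u - v) ^ 2) ^ b * (1 + u ^ 2) ^ a := by ring
      _ ≤ _ := by gcongr; exact le_add_of_nonneg_right (by positivity)

/-- For `s > 3/2` and `2 - s ≤ r ≤ 1/2`, there is `C = C(s,r) > 0` such that
for every `k ∈ ℤ`, `∑_{n ∈ ℤ} (1+n²)^{1-s} (1+(n-k)²)^{r-1} ≤ C (1+k²)^{r-1}`. -/
theorem sum_two_weights_estimate (s r : ℝ) (hs : 3/2 < s) (hr1 : 2 - s ≤ r) (hr2 : r ≤ 1/2) :
    ∃ C : ℝ, 0 < C ∧ ∀ k : ℤ,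
      ∑' n : ℤ, ENNReal.ofReal
          ((1 + (n : ℝ) ^ 2) ^ (1 - s) * (1 + ((n : ℝ) - (k : ℝ)) ^ 2) ^ (r - 1)) ≤
        ENNReal.ofReal (C * (1 + (k : ℝ) ^ 2) ^ (r - 1)) := by
  let g : ℤ → ℝ := fun n => (1 + (n : ℝ) ^ 2) ^ (1 - s)
  have hg : Summable g := summable_one_add_sq_rpow (by linarith)
  have hg0 : ∀ n, 0 ≤ g n := fun n => by positivity
  have hT : 0 < ∑' n, g n := hg.tsum_pos hg0 0 (by positivity)
  refine ⟨2 * 4 ^ (-(r - 1)) * ∑' n, g n, by positivity, fun k => ?_⟩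
  have hgk : Summable fun n => g (n - k) := (Equiv.subRight k).summable_iff.2 hg
  have hshift : ∑' n, g (n - k) = ∑' n, g n := (Equiv.subRight k).tsum_eq g
  let c : ℝ := 4 ^ (-(r - 1)) * (1 + (k : ℝ) ^ 2) ^ (r - 1)
  calc ∑' n : ℤ, ENNReal.ofReal
          ((1 + (n : ℝ) ^ 2) ^ (1 - s) * (1 + ((n : ℝ) - (k : ℝ)) ^ 2) ^ (r - 1))
      ≤ ∑' n : ℤ, ENNReal.ofReal (c * (g n + g (n - k))) := by
        refine ENNReal.tsum_le_tsum fun n => ENNReal.ofReal_le_ofReal ?_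
        simpa only [g, c, sub_sub_cancel, Int.cast_sub] using
          one_add_sq_rpow_mul_le (a := 1 - s) (b := r - 1) (by linarith) (by linarith) n (n - k)
    _ = ENNReal.ofReal (c * (∑' n, g n + ∑' n, g (n - k))) := by
        rw [← hg.tsum_add hgk, ← tsum_mul_left,
          ENNReal.ofReal_tsum_of_nonneg (fun n => by positivity) ((hg.add hgk).mul_left c)]
    _ = ENNReal.ofReal (2 * 4 ^ (-(r - 1)) * (∑' n, g n) * (1 + (k : ℝ) ^ 2) ^ (r - 1)) := by
        rw [hshift]
        congr 1
        simp only [c]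
        ring
end

section
/- Let s > 1 and r < 1/2. Then there exists a constant C = C(s, r) > 0 such that for every integer k ≥ 0, ∑_{k/2 ≤ n ≤ 3k/2} (1+n²)^{1-s} (1+(n-k)²)^{r-1} ≤ C (1+k²)^{1-s}, where the sum is over integers n with k/2 ≤ n ≤ 3k/2. -/
/-!
On the block `k/2 ≤ n ≤ 3k/2` we have `1 + n² ≥ (1 + k²)/4`, so the first factor is at most
`4^(s-1) (1 + k²)^(1-s)` uniformly in `n`. What remains is a sum of `(1 + (n-k)²)^(r-1)` over
distinct shifts `n - k`, bounded by the full series `∑_{m ∈ ℤ} (1 + m²)^(r-1)`, which converges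
because `2(1 - r) > 1`.
-/

open scoped ENNReal

theorem one_add_sq_rpow_le_abs_rpow {q x : ℝ} (hq : q ≤ 0) (hx : x ≠ 0) :
    (1 + x ^ 2) ^ q ≤ |x| ^ (2 * q) := by
  calc (1 + x ^ 2) ^ q ≤ (x ^ 2) ^ q :=
        Real.rpow_le_rpow_of_nonpos (by positivity) (by linarith) hq
    _ = |x| ^ (2 * q) := by
        rw [← sq_abs, ← Real.rpow_natCast, ← Real.rpow_mul (abs_nonneg x)]
        norm_num

theorem summable_one_add_sq_rpow_s7 {q : ℝ} (hq : q < -1 / 2) :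
    Summable fun m : ℤ => (1 + (m : ℝ) ^ 2) ^ q := by
  have hdecay : Summable fun m : ℤ => |(m : ℝ)| ^ (2 * q) := by
    simpa using Real.summable_abs_int_rpow (b := -(2 * q)) (by linarith)
  refine hdecay.of_norm_bounded_eventually ?_
  filter_upwards [(Set.finite_singleton (0 : ℤ)).compl_mem_cofinite] with m hm
  rw [Real.norm_of_nonneg (by positivity)]
  exact one_add_sq_rpow_le_abs_rpow (by linarith) (by exact_mod_cast hm)

theorem one_add_sq_rpow_le_of_le_two_mul {q x y : ℝ} (hq : q ≤ 0) (hy : 0 ≤ y)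
    (hyx : y ≤ 2 * x) : (1 + x ^ 2) ^ q ≤ 4 ^ (-q) * (1 + y ^ 2) ^ q := by
  have hquarter : (1 + y ^ 2) / 4 ≤ 1 + x ^ 2 := by nlinarith
  calc (1 + x ^ 2) ^ q ≤ ((1 + y ^ 2) / 4) ^ q :=
        Real.rpow_le_rpow_of_nonpos (by positivity) hquarter hq
    _ = 4 ^ (-q) * (1 + y ^ 2) ^ q := by
        rw [Real.div_rpow (by positivity) (by norm_num), Real.rpow_neg (by norm_num)]
        ring

theorem tsum_ofReal_mul_shift_le {p : ℤ → Prop} {a g : ℝ → ℝ} {c : ℝ} (hc : 0 ≤ c)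
    (ha : ∀ n : ℤ, p n → a n ≤ c) (hg : ∀ x, 0 ≤ g x) (hsum : Summable fun m : ℤ => g m)
    (k : ℤ) :
    ∑' n : {m : ℤ // p m}, ENNReal.ofReal (a n * g (n - k)) ≤
      ENNReal.ofReal (c * ∑' m : ℤ, g m) := by
  have hshift : Function.Injective fun n : {m : ℤ // p m} => (n : ℤ) - k :=
    fun n n' h => Subtype.ext (sub_left_injective h)
  calc ∑' n : {m : ℤ // p m}, ENNReal.ofReal (a n * g (n - k))
      ≤ ∑' n : {m : ℤ // p m}, ENNReal.ofReal c * ENNReal.ofReal (g ((n - k : ℤ) : ℝ)) := by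
        refine ENNReal.tsum_le_tsum fun n => ?_
        rw [← ENNReal.ofReal_mul hc, Int.cast_sub]
        exact ENNReal.ofReal_le_ofReal
          (mul_le_mul_of_nonneg_right (ha n n.2) (hg _))
    _ = ENNReal.ofReal c * ∑' n : {m : ℤ // p m}, ENNReal.ofReal (g ((n - k : ℤ) : ℝ)) :=
        ENNReal.tsum_mul_left
    _ ≤ ENNReal.ofReal c * ∑' m : ℤ, ENNReal.ofReal (g m) := by
        gcongr
        exact ENNReal.tsum_comp_le_tsum_of_injective hshift fun m : ℤ => ENNReal.ofReal (g m)
    _ = ENNReal.ofReal (c * ∑' m : ℤ, g m) := by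
        rw [ENNReal.ofReal_mul hc,
          ENNReal.ofReal_tsum_of_nonneg (f := fun m : ℤ => g m) (fun m => hg m) hsum]

/-- For `s > 1` and `r < 1/2`, there is `C = C(s,r) > 0` such that for every
integer `k ≥ 0`, `∑_{k/2 ≤ n ≤ 3k/2} (1+n²)^{1-s} (1+(n-k)²)^{r-1} ≤ C (1+k²)^{1-s}`, the sum
running over the integers `n` with `k/2 ≤ n ≤ 3k/2` (i.e. `k ≤ 2n` and `2n ≤ 3k`). -/
theorem sum_middle_block_estimate (s r : ℝ) (hs : 1 < s) (hr : r < 1/2) :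
    ∃ C : ℝ, 0 < C ∧ ∀ k : ℤ, 0 ≤ k →
      ∑' n : {m : ℤ // k ≤ 2 * m ∧ 2 * m ≤ 3 * k}, ENNReal.ofReal
          ((1 + ((n : ℤ) : ℝ) ^ 2) ^ (1 - s) *
            (1 + (((n : ℤ) : ℝ) - (k : ℝ)) ^ 2) ^ (r - 1)) ≤
        ENNReal.ofReal (C * (1 + (k : ℝ) ^ 2) ^ (1 - s)) := by
  have hsum := summable_one_add_sq_rpow_s7 (q := r - 1) (by linarith)
  set S := ∑' m : ℤ, (1 + (m : ℝ) ^ 2) ^ (r - 1)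
  have hS : 1 ≤ S := by
    simpa using hsum.le_tsum 0 fun m _ => by positivity
  refine ⟨4 ^ (s - 1) * S, mul_pos (by positivity) (by linarith), fun k hk => ?_⟩
  have hk' : (0 : ℝ) ≤ k := by exact_mod_cast hk
  calc _ ≤ ENNReal.ofReal (4 ^ (s - 1) * (1 + (k : ℝ) ^ 2) ^ (1 - s) * S) := by
        refine tsum_ofReal_mul_shift_le (a := fun x => (1 + x ^ 2) ^ (1 - s))
          (g := fun x => (1 + x ^ 2) ^ (r - 1)) (by positivity) (fun n hn => ?_)
          (fun x => by positivity) hsum k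
        rw [← neg_sub 1 s]
        exact one_add_sq_rpow_le_of_le_two_mul (by linarith) hk' (by exact_mod_cast hn.1)
    _ = _ := by ring_nf
end

section
/- Fix p, q > 0 with p + q > 1 and fix ε > 0. Set ε_q = ε if q = 1 and ε_q = 0 if q ≠ 1, set ε_p = ε if p = 1 and ε_p = 0 if p ≠ 1, and let ρ = min{p − ε_q, q − ε_p, p + q − 1}. Then there exists a constant C = C(p, q, ε) > 0 such that for all α, β ∈ ℝ, ∫_ℝ (1+|x−α|)^{−p} (1+|x−β|)^{−q} dx ≤ C (1+|α−β|)^{−ρ}. -/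
open MeasureTheory Set Real
open scoped ENNReal

/-!
Split `ℝ` into the points closer to `α` and those closer to `β`; by symmetry it suffices to treat
the former, where `⟨x - β⟩ ≥ ⟨x - α⟩`. Writing `D = ⟨α - β⟩`, on the ball `⟨x - α⟩ ≤ D / 2` the
triangle inequality gives `⟨x - β⟩ ≥ D / 2`, so the integrand is at most `(D/2)^{-q} ⟨x - α⟩^{-p}`,
and `∫_{⟨u⟩ ≤ R} ⟨u⟩^{-p} du ≲ R^m` with `m = bulkExponent ε p`. Off the ball the integrand is at
most `⟨x - α⟩^{-(p+q)}`, whose tail integral is `≲ D^{1-p-q}`. The substitution `s = 1 + |x - a|`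
turns every integral into one of `s ^ r` over a subset of `(1, ∞)`.
-/
theorem lintegral_comp_abs (f : ℝ → ℝ≥0∞) : ∫⁻ x, f |x| = 2 * ∫⁻ x in Ioi 0, f x := by
  have hpos : ∫⁻ x in Ioi 0, f |x| = ∫⁻ x in Ioi 0, f x :=
    setLIntegral_congr_fun measurableSet_Ioi fun x hx => by rw [abs_of_pos hx]
  have hneg : ∫⁻ x in Iic 0, f |x| = ∫⁻ x in Ioi 0, f |x| := by
    rw [setLIntegral_congr Ioi_ae_eq_Ici, ← (Measure.measurePreserving_neg volume)
      |>.setLIntegral_comp_preimage_emb (MeasurableEquiv.neg ℝ).measurableEmbedding]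
    simp [abs_neg]
  rw [← setLIntegral_univ, ← Iic_union_Ioi (a := (0 : ℝ)),
    lintegral_union measurableSet_Ioi (Iic_disjoint_Ioi le_rfl), hneg, hpos, two_mul]

theorem lintegral_comp_one_add_abs_sub (f : ℝ → ℝ≥0∞) (a : ℝ) :
    ∫⁻ x, f (1 + |x - a|) = 2 * ∫⁻ s in Ioi 1, f s := by
  have hshift : ∫⁻ t in Ioi 0, f (1 + t) = ∫⁻ s in Ioi 1, f s := by
    have h := (measurePreserving_add_left volume (1 : ℝ)).setLIntegral_comp_preimage_emb
      (MeasurableEquiv.addLeft 1).measurableEmbedding f (Ioi 1)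
    rwa [preimage_const_add_Ioi, sub_self] at h
  rw [lintegral_sub_right_eq_self (fun x => f (1 + |x|)) a, lintegral_comp_abs (fun t => f (1 + t)),
    hshift]

theorem setLIntegral_comp_one_add_abs_sub (f : ℝ → ℝ≥0∞) (a : ℝ) {S : Set ℝ}
    (hS : MeasurableSet S) :
    ∫⁻ x in {x | 1 + |x - a| ∈ S}, f (1 + |x - a|) = 2 * ∫⁻ s in S ∩ Ioi 1, f s := by
  have hmeas : MeasurableSet {x : ℝ | 1 + |x - a| ∈ S} :=
    (by fun_prop : Measurable fun x : ℝ => 1 + |x - a|) hS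
  rw [← lintegral_indicator hmeas, ← Measure.restrict_restrict hS, ← lintegral_indicator hS]
  exact lintegral_comp_one_add_abs_sub (S.indicator f) a

theorem lintegral_Ioi_rpow_neg {r R : ℝ} (hr : 1 < r) (hR : 0 < R) :
    ∫⁻ s in Ioi R, ENNReal.ofReal (s ^ (-r)) = ENNReal.ofReal (R ^ (1 - r) / (r - 1)) := by
  rw [← ofReal_integral_eq_lintegral_ofReal (integrableOn_Ioi_rpow_of_lt (by linarith) hR)
    (ae_restrict_of_forall_mem measurableSet_Ioi fun s hs => (rpow_pos_of_pos (hR.trans hs) _).le),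
    integral_Ioi_rpow_of_lt (by linarith) hR]
  congr 1
  rw [show -r + 1 = -(r - 1) by ring, neg_div_neg_eq, neg_sub]

theorem lintegral_Ioc_zero_rpow {r R : ℝ} (hr : -1 < r) (hR : 0 ≤ R) :
    ∫⁻ s in Ioc 0 R, ENNReal.ofReal (s ^ r) = ENNReal.ofReal (R ^ (r + 1) / (r + 1)) := by
  rw [← ofReal_integral_eq_lintegral_ofReal
    ((intervalIntegral.intervalIntegrable_rpow' hr).1)
    (ae_restrict_of_forall_mem measurableSet_Ioc fun s hs => (rpow_pos_of_pos hs.1 _).le),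
    ← intervalIntegral.integral_of_le hR, integral_rpow (Or.inl hr),
    zero_rpow (by linarith), sub_zero]

/-- The growth rate of `∫₁^R s^{-p} ds`: `R^{1-p}` for `p < 1`, bounded for `p > 1`, and
`log R ≤ R^ε / ε` for `p = 1`. -/
noncomputable def bulkExponent (ε p : ℝ) : ℝ := max (if p = 1 then ε else 0) (1 - p)

theorem bulkExponent_spec {ε : ℝ} (hε : 0 < ε) (p : ℝ) :
    0 ≤ bulkExponent ε p ∧ 1 - p ≤ bulkExponent ε p ∧ (1 < p ∨ 0 < bulkExponent ε p) := by
  refine ⟨le_max_of_le_left (by split_ifs <;> linarith), le_max_right _ _, ?_⟩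
  rcases lt_trichotomy p 1 with hp | rfl | hp
  · exact Or.inr (lt_max_of_lt_right (by linarith))
  · exact Or.inr (lt_max_of_lt_left (by simpa using hε))
  · exact Or.inl hp

theorem exists_lintegral_Ioc_one_rpow_neg_le {p m : ℝ} (hm0 : 0 ≤ m) (hm : 1 - p ≤ m)
    (hpm : 1 < p ∨ 0 < m) :
    ∃ K : ℝ, 0 ≤ K ∧ ∀ R : ℝ, 0 ≤ R →
      ∫⁻ s in Ioc 1 R, ENNReal.ofReal (s ^ (-p)) ≤ ENNReal.ofReal (K * R ^ m) := by
  by_cases hm_pos : 0 < m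
  · refine ⟨1 / m, by positivity, fun R hR => ?_⟩
    calc ∫⁻ s in Ioc 1 R, ENNReal.ofReal (s ^ (-p))
        ≤ ∫⁻ s in Ioc 1 R, ENNReal.ofReal (s ^ (m - 1)) :=
          setLIntegral_mono' measurableSet_Ioc fun s hs =>
            ENNReal.ofReal_le_ofReal (rpow_le_rpow_of_exponent_le hs.1.le (by linarith))
      _ ≤ ∫⁻ s in Ioc 0 R, ENNReal.ofReal (s ^ (m - 1)) :=
          lintegral_mono_set (Ioc_subset_Ioc_left zero_le_one)
      _ = ENNReal.ofReal (1 / m * R ^ m) := by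
          rw [lintegral_Ioc_zero_rpow (by linarith) hR, sub_add_cancel, one_div_mul_eq_div]
  · have hp : 1 < p := hpm.resolve_right hm_pos
    have hm_zero : m = 0 := by linarith [not_lt.mp hm_pos]
    refine ⟨1 / (p - 1), by have := sub_pos.mpr hp; positivity, fun R _ => ?_⟩
    calc ∫⁻ s in Ioc 1 R, ENNReal.ofReal (s ^ (-p))
        ≤ ∫⁻ s in Ioi 1, ENNReal.ofReal (s ^ (-p)) := lintegral_mono_set Ioc_subset_Ioi_self
      _ = ENNReal.ofReal (1 / (p - 1) * R ^ m) := by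
          rw [lintegral_Ioi_rpow_neg hp one_pos, one_rpow, hm_zero, rpow_zero, mul_one]

theorem setLIntegral_near_le {p q K m : ℝ} (hq : 0 ≤ q)
    (hK : ∀ R : ℝ, 0 ≤ R →
      ∫⁻ s in Ioc 1 R, ENNReal.ofReal (s ^ (-p)) ≤ ENNReal.ofReal (K * R ^ m)) (α β : ℝ) :
    ∫⁻ x in {x | 1 + |x - α| ≤ (1 + |α - β|) / 2},
        ENNReal.ofReal ((1 + |x - α|) ^ (-p) * (1 + |x - β|) ^ (-q)) ≤
      ENNReal.ofReal (2 * K * ((1 + |α - β|) / 2) ^ (m - q)) := by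
  set R := (1 + |α - β|) / 2 with hR_def
  have hR : 0 < R := by positivity
  have hbound : ∀ x ∈ {x | 1 + |x - α| ≤ R},
      ENNReal.ofReal ((1 + |x - α|) ^ (-p) * (1 + |x - β|) ^ (-q)) ≤
        ENNReal.ofReal (R ^ (-q)) * ENNReal.ofReal ((1 + |x - α|) ^ (-p)) := by
    intro x (hx : 1 + |x - α| ≤ R)
    have hβ : R ≤ 1 + |x - β| := by
      have := abs_sub_le α x β
      rw [abs_sub_comm α x] at this
      linarith
    rw [← ENNReal.ofReal_mul (by positivity), mul_comm]
    exact ENNReal.ofReal_le_ofReal (mul_le_mul_of_nonneg_right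
      (rpow_le_rpow_of_nonpos hR hβ (neg_nonpos.mpr hq)) (by positivity))
  calc _ ≤ ∫⁻ x in {x | 1 + |x - α| ≤ R},
          ENNReal.ofReal (R ^ (-q)) * ENNReal.ofReal ((1 + |x - α|) ^ (-p)) :=
        setLIntegral_mono' (measurableSet_le (by fun_prop) measurable_const) hbound
    _ = ENNReal.ofReal (R ^ (-q)) * (2 * ∫⁻ s in Ioc 1 R, ENNReal.ofReal (s ^ (-p))) := by
        rw [lintegral_const_mul' _ _ ENNReal.ofReal_ne_top, ← Iic_inter_Ioi,
          ← setLIntegral_comp_one_add_abs_sub (fun s => ENNReal.ofReal (s ^ (-p))) α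
            measurableSet_Iic]
        rfl
    _ ≤ ENNReal.ofReal (R ^ (-q)) * (2 * ENNReal.ofReal (K * R ^ m)) := by
        gcongr; exact hK R hR.le
    _ = ENNReal.ofReal (2 * K * R ^ (m - q)) := by
        rw [← ENNReal.ofReal_ofNat 2, ← ENNReal.ofReal_mul zero_le_two,
          ← ENNReal.ofReal_mul (by positivity), sub_eq_add_neg, rpow_add hR]
        ring_nf

theorem setLIntegral_far_le {p q : ℝ} (hq : 0 ≤ q) (hpq : 1 < p + q) (α β : ℝ) :
    ∫⁻ x in {x | |x - α| ≤ |x - β|} \ {x | 1 + |x - α| ≤ (1 + |α - β|) / 2},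
        ENNReal.ofReal ((1 + |x - α|) ^ (-p) * (1 + |x - β|) ^ (-q)) ≤
      ENNReal.ofReal (2 * ((1 + |α - β|) / 2) ^ (1 - (p + q)) / (p + q - 1)) := by
  set R := (1 + |α - β|) / 2
  have hR : 0 < R := by positivity
  have hbound : ∀ x ∈ {x | |x - α| ≤ |x - β|} \ {x | 1 + |x - α| ≤ R},
      ENNReal.ofReal ((1 + |x - α|) ^ (-p) * (1 + |x - β|) ^ (-q)) ≤
        ENNReal.ofReal ((1 + |x - α|) ^ (-(p + q))) := by
    rintro x ⟨hcloser : |x - α| ≤ |x - β|, -⟩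
    have hα : 0 < 1 + |x - α| := by positivity
    rw [neg_add, rpow_add hα]
    exact ENNReal.ofReal_le_ofReal (mul_le_mul_of_nonneg_left
      (rpow_le_rpow_of_nonpos hα (by linarith)
        (neg_nonpos.mpr hq)) (by positivity))
  calc _ ≤ ∫⁻ x in {x | |x - α| ≤ |x - β|} \ {x | 1 + |x - α| ≤ R},
          ENNReal.ofReal ((1 + |x - α|) ^ (-(p + q))) :=
        setLIntegral_mono' ((measurableSet_le (by fun_prop) (by fun_prop)).diff
          (measurableSet_le (by fun_prop) measurable_const)) hbound
    _ ≤ ∫⁻ x in {x | 1 + |x - α| ∈ Ioi R}, ENNReal.ofReal ((1 + |x - α|) ^ (-(p + q))) :=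
        lintegral_mono_set fun x hx => show R < 1 + |x - α| from lt_of_not_ge hx.2
    _ = 2 * ∫⁻ s in Ioi R ∩ Ioi 1, ENNReal.ofReal (s ^ (-(p + q))) :=
        setLIntegral_comp_one_add_abs_sub (fun s => ENNReal.ofReal (s ^ (-(p + q)))) α
          measurableSet_Ioi
    _ ≤ 2 * ∫⁻ s in Ioi R, ENNReal.ofReal (s ^ (-(p + q))) := by
        gcongr; exact inter_subset_left
    _ = ENNReal.ofReal (2 * R ^ (1 - (p + q)) / (p + q - 1)) := by
        rw [lintegral_Ioi_rpow_neg hpq hR, ← ENNReal.ofReal_ofNat 2,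
          ← ENNReal.ofReal_mul zero_le_two, mul_div_assoc]

theorem div_two_rpow_le {D e e' : ℝ} (hD : 1 ≤ D) (h : e ≤ e') :
    (D / 2) ^ e ≤ 2 ^ (-e) * D ^ e' := by
  rw [div_rpow (by linarith) zero_le_two, rpow_neg zero_le_two, div_eq_inv_mul]
  gcongr

theorem exists_setLIntegral_closer_le {p q m : ℝ} (hq : 0 ≤ q) (hpq : 1 < p + q) (hm0 : 0 ≤ m)
    (hm : 1 - p ≤ m) (hpm : 1 < p ∨ 0 < m) :
    ∃ C : ℝ, 0 < C ∧ ∀ α β : ℝ,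
      ∫⁻ x in {x | |x - α| ≤ |x - β|},
          ENNReal.ofReal ((1 + |x - α|) ^ (-p) * (1 + |x - β|) ^ (-q)) ≤
        ENNReal.ofReal (C * (1 + |α - β|) ^ (m - q)) := by
  obtain ⟨K, hK0, hK⟩ := exists_lintegral_Ioc_one_rpow_neg_le hm0 hm hpm
  have hpq' : 0 < p + q - 1 := by linarith
  refine ⟨2 * K * 2 ^ (-(m - q)) + 2 * 2 ^ (-(1 - (p + q))) / (p + q - 1), by positivity,
    fun α β => ?_⟩
  set D := 1 + |α - β|
  have hD : 1 ≤ D := by simp only [D]; linarith [abs_nonneg (α - β)]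
  calc _ = (∫⁻ x in {x | |x - α| ≤ |x - β|} ∩ {x | 1 + |x - α| ≤ D / 2},
            ENNReal.ofReal ((1 + |x - α|) ^ (-p) * (1 + |x - β|) ^ (-q))) +
          ∫⁻ x in {x | |x - α| ≤ |x - β|} \ {x | 1 + |x - α| ≤ D / 2},
            ENNReal.ofReal ((1 + |x - α|) ^ (-p) * (1 + |x - β|) ^ (-q)) :=
        (lintegral_inter_add_sdiff _ _ (measurableSet_le (by fun_prop) measurable_const)).symm
    _ ≤ ENNReal.ofReal (2 * K * (D / 2) ^ (m - q)) +
          ENNReal.ofReal (2 * (D / 2) ^ (1 - (p + q)) / (p + q - 1)) :=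
        add_le_add ((lintegral_mono_set inter_subset_right).trans (setLIntegral_near_le hq hK α β))
          (setLIntegral_far_le hq hpq α β)
    _ ≤ ENNReal.ofReal ((2 * K * 2 ^ (-(m - q)) + 2 * 2 ^ (-(1 - (p + q))) / (p + q - 1)) *
          D ^ (m - q)) := by
        rw [← ENNReal.ofReal_add (by positivity) (by positivity)]
        apply ENNReal.ofReal_le_ofReal
        have hnear := div_two_rpow_le hD (le_refl (m - q))
        have hfar := div_two_rpow_le hD (show 1 - (p + q) ≤ m - q by linarith)
        calc _ ≤ 2 * K * (2 ^ (-(m - q)) * D ^ (m - q)) +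
              2 * (2 ^ (-(1 - (p + q))) * D ^ (m - q)) / (p + q - 1) := by gcongr
          _ = _ := by ring

/-- Fix `p, q > 0` with `p + q > 1` and `ε > 0`. With `ε_q = ε` if `q = 1`
and `ε_q = 0` otherwise (similarly `ε_p`), and `ρ = min {p - ε_q, q - ε_p, p + q - 1}`, there
is `C = C(p,q,ε) > 0` such that for all `α, β ∈ ℝ`,
`∫_ℝ (1+|x-α|)^{-p} (1+|x-β|)^{-q} dx ≤ C (1+|α-β|)^{-ρ}`. -/
theorem kernel_convolution_decay (p q ε : ℝ) (hp : 0 < p) (hq : 0 < q)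
    (hpq : 1 < p + q) (hε : 0 < ε) :
    ∃ C : ℝ, 0 < C ∧ ∀ α β : ℝ,
      (∫⁻ x : ℝ, ENNReal.ofReal ((1 + |x - α|) ^ (-p) * (1 + |x - β|) ^ (-q))) ≤
        ENNReal.ofReal (C * (1 + |α - β|) ^
          (-(min (min (p - (if q = 1 then ε else 0)) (q - (if p = 1 then ε else 0)))
            (p + q - 1)))) := by
  obtain ⟨hp0, hp1, hp2⟩ := bulkExponent_spec hε p
  obtain ⟨hq0, hq1, hq2⟩ := bulkExponent_spec hε q
  obtain ⟨C₁, hC₁, h₁⟩ := exists_setLIntegral_closer_le hq.le hpq hp0 hp1 hp2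
  obtain ⟨C₂, hC₂, h₂⟩ := exists_setLIntegral_closer_le hp.le (by linarith) hq0 hq1 hq2
  refine ⟨C₁ + C₂, add_pos hC₁ hC₂, fun α β => ?_⟩
  have hD : 1 ≤ 1 + |α - β| := by linarith [abs_nonneg (α - β)]
  calc _ ≤ (∫⁻ x in {x | |x - α| ≤ |x - β|},
            ENNReal.ofReal ((1 + |x - α|) ^ (-p) * (1 + |x - β|) ^ (-q))) +
          ∫⁻ x in {x | |x - β| ≤ |x - α|},
            ENNReal.ofReal ((1 + |x - α|) ^ (-p) * (1 + |x - β|) ^ (-q)) := by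
        rw [← setLIntegral_univ]
        exact (lintegral_mono_set fun x _ => le_total |x - α| |x - β|).trans
          (lintegral_union_le _ _ _)
    _ ≤ ENNReal.ofReal (C₁ * (1 + |α - β|) ^ (bulkExponent ε p - q)) +
          ENNReal.ofReal (C₂ * (1 + |α - β|) ^ (bulkExponent ε q - p)) := by
        gcongr
        · exact h₁ α β
        · simpa only [abs_sub_comm β α, mul_comm] using h₂ β α
    _ ≤ _ := by
        rw [← ENNReal.ofReal_add (by positivity) (by positivity), add_mul]
        gcongr ENNReal.ofReal (C₁ * _ ^ ?_ + C₂ * _ ^ ?_) <;> grind [bulkExponent]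
end

section
/- Let p, q > 0 and fix ε > 0. Set m = min{p, p + q − 1} if q ≠ 1 and m = p − ε if q = 1. Then there exists a constant C = C(p, q, ε) > 0 such that for every a > 0, ∫_0^{2a} (1+|a+x|)^{−p} (1+|a−x|)^{−q} dx ≤ C (1+a)^{−m}. -/
/-!
On `[0, 2a]` we have `|a + x| ≥ a`, so the first factor is at most `(1 + a)^(-p)`. The second
factor is symmetric about `x = a`, so its integral is `2 ∫_0^a (1 + t)^(-q) dt`, which is bounded
by `(1 + a)^(1-q) / (1 - q)` for `q < 1`, by `1 / (q - 1)` for `q > 1`, and equals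
`log (1 + a) ≤ (1 + a)^ε / ε` for `q = 1`.
-/

open MeasureTheory

lemma integral_one_add_rpow_neg {q a : ℝ} (hq : q ≠ 1) (ha : 0 ≤ a) :
    ∫ t in (0 : ℝ)..a, (1 + t) ^ (-q) = ((1 + a) ^ (1 - q) - 1) / (1 - q) := by
  have h0 : (0 : ℝ) ∉ Set.uIcc 1 (1 + a) := by
    rw [Set.uIcc_of_le (by linarith)]; exact fun h => by linarith [h.1]
  rw [intervalIntegral.integral_comp_add_left (fun t : ℝ => t ^ (-q)),
    integral_rpow (Or.inr ⟨fun h => hq (neg_injective h), by simpa using h0⟩)]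
  simp [neg_add_eq_sub]

lemma integral_one_add_rpow_neg_one {a : ℝ} (ha : 0 ≤ a) :
    ∫ t in (0 : ℝ)..a, (1 + t) ^ (-1 : ℝ) = Real.log (1 + a) := by
  have h0 : (0 : ℝ) ∉ Set.uIcc 1 (1 + a) := by
    rw [Set.uIcc_of_le (by linarith)]; exact fun h => by linarith [h.1]
  rw [intervalIntegral.integral_comp_add_left (fun t : ℝ => t ^ (-1 : ℝ))]
  simp only [Real.rpow_neg_one, add_zero]
  rw [integral_inv h0, div_one]

lemma integral_one_add_rpow_neg_le_of_ne_one {q a : ℝ} (hq : q ≠ 1) (ha : 0 ≤ a) :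
    ∫ t in (0 : ℝ)..a, (1 + t) ^ (-q) ≤ (1 + a) ^ max 0 (1 - q) / |1 - q| := by
  rw [integral_one_add_rpow_neg hq ha]
  rcases hq.lt_or_gt with hlt | hgt
  · rw [max_eq_right (by linarith), abs_of_pos (by linarith)]
    gcongr
    linarith
  · have hle : (1 + a) ^ (1 - q) ≤ 1 :=
      Real.rpow_le_one_of_one_le_of_nonpos (by linarith) (by linarith)
    have hpos : 0 < (1 + a) ^ (1 - q) := by positivity
    rw [max_eq_left (by linarith), abs_of_neg (by linarith), Real.rpow_zero,
      ← neg_div_neg_eq, neg_sub]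
    gcongr
    · linarith
    · linarith

lemma integral_one_add_rpow_neg_one_le {ε a : ℝ} (hε : 0 < ε) (ha : 0 ≤ a) :
    ∫ t in (0 : ℝ)..a, (1 + t) ^ (-1 : ℝ) ≤ (1 + a) ^ ε / ε := by
  rw [integral_one_add_rpow_neg_one ha]
  exact Real.log_le_rpow_div (by linarith) hε

lemma exists_integral_one_add_rpow_neg_le (q : ℝ) {ε : ℝ} (hε : 0 < ε) :
    ∃ K > 0, ∀ a : ℝ, 0 ≤ a →
      ∫ t in (0 : ℝ)..a, (1 + t) ^ (-q) ≤
        K * (1 + a) ^ (if q = 1 then ε else max 0 (1 - q)) := by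
  by_cases hq : q = 1
  · subst hq
    refine ⟨1 / ε, by positivity, fun a ha => ?_⟩
    simpa [div_eq_inv_mul] using integral_one_add_rpow_neg_one_le hε ha
  · refine ⟨1 / |1 - q|, by simp [sub_eq_zero, Ne.symm hq], fun a ha => ?_⟩
    simpa [hq, div_eq_inv_mul] using integral_one_add_rpow_neg_le_of_ne_one hq ha

lemma integral_comp_abs_sub_eq_two_mul {f : ℝ → ℝ} (hf : ContinuousOn f (Set.Ici 0)) {a : ℝ}
    (ha : 0 ≤ a) : ∫ x in (0 : ℝ)..2 * a, f |a - x| = 2 * ∫ t in (0 : ℝ)..a, f t := by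
  have hcont : Continuous fun x => f |a - x| :=
    hf.comp_continuous (by fun_prop) fun x => abs_nonneg (a - x)
  rw [← intervalIntegral.integral_add_adjacent_intervals (hcont.intervalIntegrable 0 a)
    (hcont.intervalIntegrable a (2 * a))]
  have hleft : ∫ x in (0 : ℝ)..a, f |a - x| = ∫ t in (0 : ℝ)..a, f t := by
    rw [intervalIntegral.integral_congr (g := fun x => f (a - x)) fun x hx => by
      rw [Set.uIcc_of_le ha] at hx; simp only [abs_of_nonneg (sub_nonneg.2 hx.2)]]
    simp
  have hright : ∫ x in a..2 * a, f |a - x| = ∫ t in (0 : ℝ)..a, f t := by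
    rw [intervalIntegral.integral_congr (g := fun x => f (x - a)) fun x hx => by
      rw [Set.uIcc_of_le (by linarith)] at hx
      simp only [abs_sub_comm a, abs_of_nonneg (sub_nonneg.2 hx.1)]]
    simp [two_mul]
  rw [hleft, hright, two_mul]

lemma setLIntegral_Icc_rpow_neg_mul_rpow_neg_le {p : ℝ} (q : ℝ) (hp : 0 ≤ p) {a : ℝ}
    (ha : 0 ≤ a) :
    ∫⁻ x in Set.Icc (0 : ℝ) (2 * a),
        ENNReal.ofReal ((1 + |a + x|) ^ (-p) * (1 + |a - x|) ^ (-q)) ≤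
      ENNReal.ofReal ((1 + a) ^ (-p) * (2 * ∫ t in (0 : ℝ)..a, (1 + t) ^ (-q))) := by
  have hcont : Continuous fun x : ℝ => (1 + a) ^ (-p) * (1 + |a - x|) ^ (-q) :=
    continuous_const.mul <| (by fun_prop : Continuous fun x : ℝ => 1 + |a - x|).rpow_const
      fun x => Or.inl (by positivity)
  have hf : ContinuousOn (fun t : ℝ => (1 + t) ^ (-q)) (Set.Ici 0) :=
    (continuousOn_const.add continuousOn_id).rpow_const fun t (ht : 0 ≤ t) =>
      Or.inl (show 1 + t ≠ 0 by positivity)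
  calc
    _ ≤ ∫⁻ x in Set.Icc (0 : ℝ) (2 * a),
          ENNReal.ofReal ((1 + a) ^ (-p) * (1 + |a - x|) ^ (-q)) := by
      refine setLIntegral_mono (by fun_prop) fun x hx => ENNReal.ofReal_le_ofReal ?_
      refine mul_le_mul_of_nonneg_right ?_ (by positivity)
      exact Real.rpow_le_rpow_of_nonpos (by positivity)
        (by linarith [le_abs_self (a + x), hx.1]) (by linarith)
    _ = ENNReal.ofReal
          (∫ x in Set.Icc (0 : ℝ) (2 * a), (1 + a) ^ (-p) * (1 + |a - x|) ^ (-q)) :=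
      (ofReal_integral_eq_lintegral_ofReal hcont.continuousOn.integrableOn_Icc
        (Filter.Eventually.of_forall fun x => by positivity)).symm
    _ = _ := by
      rw [integral_Icc_eq_integral_Ioc, ← intervalIntegral.integral_of_le (by linarith),
        intervalIntegral.integral_const_mul,
        integral_comp_abs_sub_eq_two_mul hf ha]

theorem kernel_near_integral_estimate_general (p q ε : ℝ) (hp : 0 < p) (hε : 0 < ε) :
    ∃ C : ℝ, 0 < C ∧ ∀ a : ℝ, 0 < a →
      (∫⁻ x in Set.Icc (0 : ℝ) (2 * a),
          ENNReal.ofReal ((1 + |a + x|) ^ (-p) * (1 + |a - x|) ^ (-q))) ≤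
        ENNReal.ofReal (C * (1 + a) ^ (-(if q = 1 then p - ε else min p (p + q - 1)))) := by
  obtain ⟨K, hK, hbound⟩ := exists_integral_one_add_rpow_neg_le q hε
  refine ⟨2 * K, by positivity, fun a ha => ?_⟩
  have hexp : -(if q = 1 then p - ε else min p (p + q - 1)) =
      -p + if q = 1 then ε else max 0 (1 - q) := by
    split_ifs
    · ring
    · rcases le_total q 1 with hq1 | hq1
      · rw [min_eq_right (by linarith), max_eq_right (by linarith)]; ring
      · rw [min_eq_left (by linarith), max_eq_left (by linarith)]; ring
  refine (setLIntegral_Icc_rpow_neg_mul_rpow_neg_le q hp.le ha.le).trans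
    (ENNReal.ofReal_le_ofReal ?_)
  rw [hexp, Real.rpow_add (by linarith)]
  calc
    _ ≤ (1 + a) ^ (-p) * (2 * (K * (1 + a) ^ (if q = 1 then ε else max 0 (1 - q)))) := by
      gcongr
      exact hbound a ha.le
    _ = _ := by ring

/-- Let `p, q > 0` and `ε > 0`. With `m = min {p, p+q-1}` if `q ≠ 1` and
`m = p - ε` if `q = 1`, there is `C = C(p,q,ε) > 0` such that for every `a > 0`,
`∫_0^{2a} (1+|a+x|)^{-p} (1+|a-x|)^{-q} dx ≤ C (1+a)^{-m}`. -/
theorem kernel_near_integral_estimate (p q ε : ℝ) (hp : 0 < p) (hq : 0 < q) (hε : 0 < ε) :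
    ∃ C : ℝ, 0 < C ∧ ∀ a : ℝ, 0 < a →
      (∫⁻ x in Set.Icc (0 : ℝ) (2 * a),
          ENNReal.ofReal ((1 + |a + x|) ^ (-p) * (1 + |a - x|) ^ (-q))) ≤
        ENNReal.ofReal (C * (1 + a) ^ (-(if q = 1 then p - ε else min p (p + q - 1)))) :=
  kernel_near_integral_estimate_general p q ε hp hε
end
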